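/- Frontdoor adjustment in the unconfounded-mediator case: suppose U, U_M, U_Y are mutually independent, X = f_X(U), M = f_M(X, U_M), Y = f_Y(M, U). Then P(Y = y | do(X = x)) = Σ_m P(M = m | X = x) · Σ_{x'} P(Y = y | X = x', M = m) · P(X = x'), provided all conditioning events have positive probability. -/
import Mathlib


open scoped Classical

/-- Probability of event `E` under weight function `p` on a finite sample space. -/
noncomputable def Pr {Ω : Type*} [Fintype Ω] (p : Ω → ℝ) (E : Ω → Prop) : ℝ :=
  ∑ ω : Ω, if E ω then p ω else 0

/-- Conditional probability of `E` given `F`. -/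
noncomputable def cPr {Ω : Type*} [Fintype Ω] (p : Ω → ℝ) (E F : Ω → Prop) : ℝ :=
  Pr p (fun ω => E ω ∧ F ω) / Pr p F

section Aux

variable {Ω : Type*} [Fintype Ω] (p : Ω → ℝ)

lemma Pr_congr {E F : Ω → Prop} (h : ∀ ω, E ω ↔ F ω) : Pr p E = Pr p F :=
  Finset.sum_congr rfl fun ω _ => by simp only [h ω]

lemma Pr_nonneg (hp : ∀ ω, 0 ≤ p ω) (E : Ω → Prop) : 0 ≤ Pr p E := by
  refine Finset.sum_nonneg fun ω _ => ?_
  by_cases h : E ω <;> simp [h, hp ω]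

lemma Pr_const_and (C : Prop) (E : Ω → Prop) :
    Pr p (fun ω => C ∧ E ω) = if C then Pr p E else 0 := by
  by_cases h : C <;> simp [Pr, h]

lemma Pr_decomp_fintype {α : Type*} [Fintype α] (E : Ω → Prop) (V : Ω → α) :
    Pr p E = ∑ a : α, Pr p (fun ω => E ω ∧ V ω = a) := by
  unfold Pr
  rw [Finset.sum_comm]
  refine Finset.sum_congr rfl fun ω _ => ?_
  by_cases hE : E ω <;> simp [hE]

lemma Pr_decomp_image {α : Type*} (E : Ω → Prop) (V : Ω → α) :
    Pr p E = ∑ a ∈ Finset.univ.image V, Pr p (fun ω => E ω ∧ V ω = a) := by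
  unfold Pr
  rw [Finset.sum_comm]
  refine Finset.sum_congr rfl fun ω _ => ?_
  by_cases hE : E ω <;>
    simp [hE, Finset.sum_ite_eq, Finset.mem_image_of_mem V (Finset.mem_univ ω)]

lemma Pr_event_image {α : Type*} (A : α → Prop) (V : Ω → α) :
    Pr p (fun ω => A (V ω))
      = ∑ a ∈ Finset.univ.image V, if A a then Pr p (fun ω => V ω = a) else 0 := by
  rw [Pr_decomp_image p (fun ω => A (V ω)) V]
  refine Finset.sum_congr rfl fun a _ => ?_
  have h : ∀ ω, (A (V ω) ∧ V ω = a) ↔ (A a ∧ V ω = a) := fun ω => by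
    constructor <;> rintro ⟨h1, h2⟩ <;> subst h2 <;> exact ⟨h1, rfl⟩
  rw [Pr_congr p h, Pr_const_and]

lemma Pr_and_event_image {α : Type*} (E : Ω → Prop) (B : α → Prop) (V : Ω → α) :
    Pr p (fun ω => E ω ∧ B (V ω))
      = ∑ b ∈ Finset.univ.image V, if B b then Pr p (fun ω => E ω ∧ V ω = b) else 0 := by
  rw [Pr_decomp_image p (fun ω => E ω ∧ B (V ω)) V]
  refine Finset.sum_congr rfl fun b _ => ?_
  have h : ∀ ω, ((E ω ∧ B (V ω)) ∧ V ω = b) ↔ (B b ∧ (E ω ∧ V ω = b)) := fun ω => by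
    constructor
    · rintro ⟨⟨h1, h2⟩, h3⟩; subst h3; exact ⟨h2, h1, rfl⟩
    · rintro ⟨h1, h2, h3⟩; subst h3; exact ⟨⟨h2, h1⟩, rfl⟩
  rw [Pr_congr p h, Pr_const_and]

lemma indep_events {𝒰 𝒰M : Type*} (U : Ω → 𝒰) (UM : Ω → 𝒰M)
    (h2 : ∀ a b, Pr p (fun ω => U ω = a ∧ UM ω = b)
        = Pr p (fun ω => U ω = a) * Pr p (fun ω => UM ω = b))
    (A : 𝒰 → Prop) (B : 𝒰M → Prop) :
    Pr p (fun ω => A (U ω) ∧ B (UM ω))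
      = Pr p (fun ω => A (U ω)) * Pr p (fun ω => B (UM ω)) := by
  rw [Pr_and_event_image p (fun ω => A (U ω)) B UM]
  have hinner : ∀ b, Pr p (fun ω => A (U ω) ∧ UM ω = b)
      = Pr p (fun ω => A (U ω)) * Pr p (fun ω => UM ω = b) := by
    intro b
    rw [Pr_congr p (fun ω => and_comm), Pr_and_event_image p (fun ω => UM ω = b) A U]
    have : ∀ a ∈ Finset.univ.image U,
        (if A a then Pr p (fun ω => UM ω = b ∧ U ω = a) else 0)
          = (if A a then Pr p (fun ω => U ω = a) else 0) * Pr p (fun ω => UM ω = b) := by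
      intro a _
      by_cases hA : A a
      · simp only [hA, if_true]
        rw [Pr_congr p (fun ω => and_comm), h2 a b]
      · simp [hA]
    rw [Finset.sum_congr rfl this, ← Finset.sum_mul, ← Pr_event_image p A U]
  have : ∀ b ∈ Finset.univ.image UM,
      (if B b then Pr p (fun ω => A (U ω) ∧ UM ω = b) else 0)
        = Pr p (fun ω => A (U ω)) * (if B b then Pr p (fun ω => UM ω = b) else 0) := by
    intro b _
    by_cases hB : B b
    · simp only [hB, if_true, hinner b]
    · simp [hB]
  rw [Finset.sum_congr rfl this, ← Finset.mul_sum, ← Pr_event_image p B UM]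

end Aux

/-- Frontdoor adjustment in the unconfounded-mediator SCM
X = f_X(U), M = f_M(X, U_M), Y = f_Y(M, U), with U, U_M, U_Y mutually independent. -/
theorem frontdoor_adjustment
    {Ω 𝒰 𝒰M 𝒰Y 𝒳 ℳ 𝒴 : Type*} [Fintype Ω] [Fintype 𝒳] [Fintype ℳ]
    (p : Ω → ℝ) (hp : ∀ ω, 0 ≤ p ω) (hsum : ∑ ω, p ω = 1)
    (U : Ω → 𝒰) (UM : Ω → 𝒰M) (UY : Ω → 𝒰Y)
    (hindep : ∀ (a : 𝒰) (b : 𝒰M) (c : 𝒰Y),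
      Pr p (fun ω => U ω = a ∧ UM ω = b ∧ UY ω = c)
        = Pr p (fun ω => U ω = a) * Pr p (fun ω => UM ω = b) * Pr p (fun ω => UY ω = c))
    (fX : 𝒰 → 𝒳) (fM : 𝒳 → 𝒰M → ℳ) (fY : ℳ → 𝒰 → 𝒴)
    (X : Ω → 𝒳) (M : Ω → ℳ) (Y : Ω → 𝒴)
    (hX : ∀ ω, X ω = fX (U ω))
    (hM : ∀ ω, M ω = fM (X ω) (UM ω))
    (hY : ∀ ω, Y ω = fY (M ω) (U ω))
    (x : 𝒳) (y : 𝒴)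
    (hposX : ∀ x' : 𝒳, 0 < Pr p (fun ω => X ω = x'))
    (hposXM : ∀ (x' : 𝒳) (m : ℳ), 0 < Pr p (fun ω => X ω = x' ∧ M ω = m)) :
    Pr p (fun ω => fY (fM x (UM ω)) (U ω) = y)
      = ∑ m : ℳ, cPr p (fun ω => M ω = m) (fun ω => X ω = x)
          * ∑ x' : 𝒳, cPr p (fun ω => Y ω = y) (fun ω => X ω = x' ∧ M ω = m)
              * Pr p (fun ω => X ω = x') := by
  -- two-variable pointwise independence
  have h2 : ∀ a b, Pr p (fun ω => U ω = a ∧ UM ω = b)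
      = Pr p (fun ω => U ω = a) * Pr p (fun ω => UM ω = b) := by
    intro a b
    have hone : ∑ c ∈ Finset.univ.image UY, Pr p (fun ω => UY ω = c) = 1 := by
      have hd := Pr_decomp_image p (fun _ : Ω => True) UY
      have h1 : Pr p (fun _ : Ω => True) = 1 := by simp [Pr, hsum]
      rw [h1] at hd
      calc ∑ c ∈ Finset.univ.image UY, Pr p (fun ω => UY ω = c)
          = ∑ c ∈ Finset.univ.image UY, Pr p (fun ω => True ∧ UY ω = c) :=
            Finset.sum_congr rfl fun c _ => Pr_congr p (fun ω => by simp)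
        _ = 1 := hd.symm
    rw [Pr_decomp_image p (fun ω => U ω = a ∧ UM ω = b) UY]
    have : ∀ c ∈ Finset.univ.image UY,
        Pr p (fun ω => (U ω = a ∧ UM ω = b) ∧ UY ω = c)
          = Pr p (fun ω => U ω = a) * Pr p (fun ω => UM ω = b)
              * Pr p (fun ω => UY ω = c) := by
      intro c _
      rw [Pr_congr p (fun ω => and_assoc), hindep a b c]
    rw [Finset.sum_congr rfl this, ← Finset.mul_sum, hone, mul_one]
  have hAB := indep_events p U UM h2
  -- translating events
  have hXU : ∀ x', Pr p (fun ω => X ω = x') = Pr p (fun ω => fX (U ω) = x') :=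
    fun x' => Pr_congr p (fun ω => by rw [hX ω])
  have hposfX : ∀ x', 0 < Pr p (fun ω => fX (U ω) = x') := fun x' => hXU x' ▸ hposX x'
  have hXM : ∀ x' m, Pr p (fun ω => X ω = x' ∧ M ω = m)
      = Pr p (fun ω => fX (U ω) = x') * Pr p (fun ω => fM x' (UM ω) = m) := by
    intro x' m
    have hiff : ∀ ω, (X ω = x' ∧ M ω = m) ↔ (fX (U ω) = x' ∧ fM x' (UM ω) = m) := by
      intro ω
      constructor
      · rintro ⟨h1, h2⟩
        refine ⟨(hX ω) ▸ h1, ?_⟩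
        rw [← h2, hM ω, h1]
      · rintro ⟨h1, h2⟩
        have hx : X ω = x' := (hX ω).trans h1
        exact ⟨hx, by rw [hM ω, hx, h2]⟩
    rw [Pr_congr p hiff]
    exact hAB (fun a => fX a = x') (fun b => fM x' b = m)
  have hposM : ∀ x' m, 0 < Pr p (fun ω => fM x' (UM ω) = m) := by
    intro x' m
    have h := hposXM x' m
    rw [hXM x' m] at h
    rcases (Pr_nonneg p hp (fun ω => fM x' (UM ω) = m)).lt_or_eq with h' | h'
    · exact h'
    · rw [← h', mul_zero] at h; exact absurd h (lt_irrefl 0)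
  -- Step A
  have hA : ∀ m, cPr p (fun ω => M ω = m) (fun ω => X ω = x)
      = Pr p (fun ω => fM x (UM ω) = m) := by
    intro m
    unfold cPr
    have hnum : Pr p (fun ω => M ω = m ∧ X ω = x)
        = Pr p (fun ω => fX (U ω) = x) * Pr p (fun ω => fM x (UM ω) = m) := by
      rw [Pr_congr p (fun ω => and_comm), hXM x m]
    rw [hnum, hXU x, mul_comm, mul_div_assoc, div_self (ne_of_gt (hposfX x)), mul_one]
  -- Step B
  have hB : ∀ m x', cPr p (fun ω => Y ω = y) (fun ω => X ω = x' ∧ M ω = m)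
        * Pr p (fun ω => X ω = x')
      = Pr p (fun ω => fY m (U ω) = y ∧ fX (U ω) = x') := by
    intro m x'
    unfold cPr
    have hiff2 : ∀ ω, (Y ω = y ∧ (X ω = x' ∧ M ω = m))
        ↔ ((fY m (U ω) = y ∧ fX (U ω) = x') ∧ fM x' (UM ω) = m) := by
      intro ω
      constructor
      · rintro ⟨hy, hx, hm⟩
        refine ⟨⟨?_, (hX ω) ▸ hx⟩, ?_⟩
        · rw [← hy, hY ω, hm]
        · rw [← hm, hM ω, hx]
      · rintro ⟨⟨hy, hx⟩, hm⟩
        have hx' : X ω = x' := (hX ω).trans hx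
        have hm' : M ω = m := by rw [hM ω, hx', hm]
        exact ⟨by rw [hY ω, hm', hy], hx', hm'⟩
    have hnum : Pr p (fun ω => Y ω = y ∧ (X ω = x' ∧ M ω = m))
        = Pr p (fun ω => fY m (U ω) = y ∧ fX (U ω) = x')
            * Pr p (fun ω => fM x' (UM ω) = m) := by
      rw [Pr_congr p hiff2]
      exact hAB (fun a => fY m a = y ∧ fX a = x') (fun b => fM x' b = m)
    rw [hnum, hXM x' m, hXU x',
      mul_div_mul_right _ _ (ne_of_gt (hposM x' m)),
      div_mul_cancel₀ _ (ne_of_gt (hposfX x'))]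
  -- Step C
  have hC : ∀ m, (∑ x' : 𝒳, Pr p (fun ω => fY m (U ω) = y ∧ fX (U ω) = x'))
      = Pr p (fun ω => fY m (U ω) = y) :=
    fun m => (Pr_decomp_fintype p (fun ω => fY m (U ω) = y) (fun ω => fX (U ω))).symm
  -- put it together
  rw [Pr_decomp_fintype p (fun ω => fY (fM x (UM ω)) (U ω) = y) (fun ω => fM x (UM ω))]
  refine Finset.sum_congr rfl fun m _ => ?_
  rw [hA m, Finset.sum_congr rfl (fun x' _ => hB m x'), hC m]
  have hiff3 : ∀ ω, (fY (fM x (UM ω)) (U ω) = y ∧ fM x (UM ω) = m)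
      ↔ (fY m (U ω) = y ∧ fM x (UM ω) = m) := by
    intro ω
    constructor
    · rintro ⟨h1, h2⟩; exact ⟨by rw [← h2]; exact h1, h2⟩
    · rintro ⟨h1, h2⟩; exact ⟨by rw [h2]; exact h1, h2⟩
  rw [Pr_congr p hiff3, hAB (fun a => fY m a = y) (fun b => fM x b = m), mul_comm]
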